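/- Define the functions c₁₁₁, c₁₁₂, c₁₂₂, c₂₂₂ on the open set {(x₁,x₂) ∈ ℝ² : x₁ ≠ 0} by: c₁₁₁ = −(9x₁⁸ + 51x₁⁶x₂² + 88x₁⁴x₂⁴ + (2x₁²x₂³ + 4x₂⁵)√((3x₁² + 4x₂²)³) + 48x₁²x₂⁶) / (2x₁(3x₁⁴ + 7x₁²x₂² + 4x₂⁴)²); c₁₁₂ = (9x₁⁶x₂ + 15x₁⁴x₂³ − 8x₁²x₂⁵ + (2x₁²x₂² + 4x₂⁴)√((3x₁² + 4x₂²)³) − 16x₂⁷) / (2(3x₁⁴ + 7x₁²x₂² + 4x₂⁴)²); c₁₂₂ = −(9x₁⁷ + 15x₁⁵x₂² − 8x₁³x₂⁴ + (2x₁³x₂ + 4x₁x₂³)√((3x₁² + 4x₂²)³) − 16x₁x₂⁶) / (2(3x₁⁴ + 7x₁²x₂² + 4x₂⁴)²); c₂₂₂ = (−27x₁⁶x₂ − 16x₂⁷ − 72x₁²x₂⁵ + (4x₁²x₂² + 2x₁⁴)√((3x₁² + 4x₂²)³) − 81x₁⁴x₂³) / (2(3x₁⁴ + 7x₁²x₂²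 + 4x₂⁴)²). Then these functions satisfy the associativity identity c₁₁₁·c₁₂₂ + c₁₁₂·c₂₂₂ = (c₁₁₂)² + (c₁₂₂)² at every point (x₁,x₂) with x₁ ≠ 0. -/
import Mathlib


noncomputable section

/-- `√((3x₁² + 4x₂²)³)`. -/
def s (x1 x2 : ℝ) : ℝ := Real.sqrt ((3 * x1 ^ 2 + 4 * x2 ^ 2) ^ 3)

/-- The correlator `c₁₁₁` of Example 1 (with `a = 1`, `c = 2/√7`). -/
def c111 (x1 x2 : ℝ) : ℝ :=
  -(9 * x1 ^ 8 + 51 * x1 ^ 6 * x2 ^ 2 + 88 * x1 ^ 4 * x2 ^ 4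
      + (2 * x1 ^ 2 * x2 ^ 3 + 4 * x2 ^ 5) * s x1 x2 + 48 * x1 ^ 2 * x2 ^ 6)
    / (2 * x1 * (3 * x1 ^ 4 + 7 * x1 ^ 2 * x2 ^ 2 + 4 * x2 ^ 4) ^ 2)

/-- The correlator `c₁₁₂` of Example 1 (with `a = 1`, `c = 2/√7`). -/
def c112 (x1 x2 : ℝ) : ℝ :=
  (9 * x1 ^ 6 * x2 + 15 * x1 ^ 4 * x2 ^ 3 - 8 * x1 ^ 2 * x2 ^ 5
      + (2 * x1 ^ 2 * x2 ^ 2 + 4 * x2 ^ 4) * s x1 x2 - 16 * x2 ^ 7)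
    / (2 * (3 * x1 ^ 4 + 7 * x1 ^ 2 * x2 ^ 2 + 4 * x2 ^ 4) ^ 2)

/-- The correlator `c₁₂₂` of Example 1 (with `a = 1`, `c = 2/√7`). -/
def c122 (x1 x2 : ℝ) : ℝ :=
  -(9 * x1 ^ 7 + 15 * x1 ^ 5 * x2 ^ 2 - 8 * x1 ^ 3 * x2 ^ 4
      + (2 * x1 ^ 3 * x2 + 4 * x1 * x2 ^ 3) * s x1 x2 - 16 * x1 * x2 ^ 6)
    / (2 * (3 * x1 ^ 4 + 7 * x1 ^ 2 * x2 ^ 2 + 4 * x2 ^ 4) ^ 2)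

/-- The correlator `c₂₂₂` of Example 1 (with `a = 1`, `c = 2/√7`). -/
def c222 (x1 x2 : ℝ) : ℝ :=
  (-27 * x1 ^ 6 * x2 - 16 * x2 ^ 7 - 72 * x1 ^ 2 * x2 ^ 5
      + (4 * x1 ^ 2 * x2 ^ 2 + 2 * x1 ^ 4) * s x1 x2 - 81 * x1 ^ 4 * x2 ^ 3)
    / (2 * (3 * x1 ^ 4 + 7 * x1 ^ 2 * x2 ^ 2 + 4 * x2 ^ 4) ^ 2)

/-- the correlators of Example 1 satisfy the associativity identity
`c₁₁₁ c₁₂₂ + c₁₁₂ c₂₂₂ = c₁₁₂² + c₁₂₂²` at every point with `x₁ ≠ 0`. -/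
theorem stmt12 :
    ∀ x1 x2 : ℝ, x1 ≠ 0 →
      c111 x1 x2 * c122 x1 x2 + c112 x1 x2 * c222 x1 x2
        = (c112 x1 x2) ^ 2 + (c122 x1 x2) ^ 2 := by
  intro x1 x2 hx1
  have hQ : (3 * x1 ^ 4 + 7 * x1 ^ 2 * x2 ^ 2 + 4 * x2 ^ 4) ≠ 0 := by
    positivity
  unfold c111 c112 c122 c222
  field_simp
  ring

end
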